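/- arXiv:2010.13916 — 3 statements merged into one kernel-verified Lean document; each statement's English description precedes it below -/
import Mathlib

section
/- Let H be an infinite-dimensional complex Hilbert space and let G denote the set of closed separable subspaces of H of infinite dimension and infinite codimension. For X, Y ∈ G, we have Y ⊆ X if and only if every Z ∈ G with Z ⊆ X^⊥ satisfies Z ⊆ Y^⊥. -/
/-- The set of closed, separable, infinite-dimensional subspaces of infinite codimension. -/
def sepGrassmannian (H : Type*) [NormedAddCommGroup H] [InnerProductSpace ℂ H] :
    Set (Submodule ℂ H) :=
  {X | IsClosed (X : Set H) ∧ TopologicalSpace.SeparableSpace X ∧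
    ¬ FiniteDimensional ℂ X ∧ ¬ FiniteDimensional ℂ Xᗮ}

/-!
Since `X` and `Y` are closed, `Y ≤ X` is equivalent to `Xᗮ ≤ Yᗮ`. The closed subspace `Xᗮ` is
infinite-dimensional with infinite-dimensional complement `Xᗮᗮ = X`, so every vector `v ∈ Xᗮ`
lies in some `Z ∈ sepGrassmannian H` with `Z ≤ Xᗮ`: the closed span of `v` together with a
linearly independent sequence in `Xᗮ`. Hence `Xᗮ` is the union of the members of the
Grassmannian below it, and the right-hand side says exactly that `Xᗮ ≤ Yᗮ`.
-/

open Submodule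

section LinearAlgebra

variable {K V : Type*} [DivisionRing K] [AddCommGroup V] [Module K V]

theorem exists_linearIndependent_nat_of_not_finiteDimensional (h : ¬ FiniteDimensional K V) :
    ∃ f : ℕ → V, LinearIndependent K f := by
  have : Infinite (Module.Basis.ofVectorSpaceIndex K V) := by
    by_contra hfin
    have := not_infinite_iff_finite.mp hfin
    exact h (Module.Finite.of_basis (Module.Basis.ofVectorSpace K V))
  exact ⟨_, (Module.Basis.ofVectorSpace K V).linearIndependent.comp _
    (Infinite.natEmbedding _).injective⟩

theorem not_finiteDimensional_span_range_of_linearIndependent {ι : Type*} [Infinite ι]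
    {f : ι → V} (hf : LinearIndependent K f) : ¬ FiniteDimensional K (span K (Set.range f)) :=
  fun _ ↦ Module.Finite.not_linearIndependent_of_infinite _ (linearIndependent_span hf)

theorem Submodule.exists_countable_subset_not_finiteDimensional_span (W : Submodule K V)
    (hW : ¬ FiniteDimensional K W) :
    ∃ s : Set V, s.Countable ∧ s ⊆ W ∧ ¬ FiniteDimensional K (span K s) := by
  obtain ⟨f, hf⟩ := exists_linearIndependent_nat_of_not_finiteDimensional hW
  refine ⟨Set.range (W.subtype ∘ f), Set.countable_range _, ?_,
    not_finiteDimensional_span_range_of_linearIndependent (hf.map' W.subtype W.ker_subtype)⟩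
  rintro _ ⟨n, rfl⟩
  exact (f n).2

end LinearAlgebra

section Grassmannian

variable {H : Type*} [NormedAddCommGroup H] [InnerProductSpace ℂ H]

theorem exists_mem_sepGrassmannian_le_of_mem {W : Submodule ℂ H} (hWc : IsClosed (W : Set H))
    (hW : ¬ FiniteDimensional ℂ W) (hWo : ¬ FiniteDimensional ℂ Wᗮ) {v : H} (hv : v ∈ W) :
    ∃ Z ∈ sepGrassmannian H, Z ≤ W ∧ v ∈ Z := by
  obtain ⟨s, hsc, hsW, hs⟩ := W.exists_countable_subset_not_finiteDimensional_span hW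
  set Z := (span ℂ (insert v s)).topologicalClosure
  have hZW : Z ≤ W :=
    topologicalClosure_minimal _ (span_le.2 (Set.insert_subset hv hsW)) hWc
  have hsZ : span ℂ s ≤ Z :=
    (span_mono (Set.subset_insert v s)).trans (le_topologicalClosure _)
  refine ⟨Z, ⟨isClosed_topologicalClosure _, ?_, ?_, ?_⟩, hZW, ?_⟩
  · exact ((hsc.insert v).isSeparable.span (R := ℂ)).closure.separableSpace
  · exact fun _ ↦ hs (finiteDimensional_of_le hsZ)
  · exact fun _ ↦ hWo (finiteDimensional_of_le (orthogonal_le hZW))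
  · exact le_topologicalClosure _ (subset_span (Set.mem_insert v s))

theorem le_of_forall_mem_sepGrassmannian_le {W U : Submodule ℂ H} (hWc : IsClosed (W : Set H))
    (hW : ¬ FiniteDimensional ℂ W) (hWo : ¬ FiniteDimensional ℂ Wᗮ)
    (h : ∀ Z ∈ sepGrassmannian H, Z ≤ W → Z ≤ U) : W ≤ U := fun v hv ↦ by
  obtain ⟨Z, hZ, hZW, hvZ⟩ := exists_mem_sepGrassmannian_le_of_mem hWc hW hWo hv
  exact h Z hZ hZW hvZ

end Grassmannian

theorem stmt14_general {H : Type*} [NormedAddCommGroup H] [InnerProductSpace ℂ H] [CompleteSpace H]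
    (X Y : Submodule ℂ H) (hX : X ∈ sepGrassmannian H) (hY : Y ∈ sepGrassmannian H) :
    Y ≤ X ↔ ∀ Z ∈ sepGrassmannian H, Z ≤ Xᗮ → Z ≤ Yᗮ := by
  obtain ⟨hXc, -, hXi, hXo⟩ := hX
  have : CompleteSpace X := hXc.completeSpace_coe
  have : CompleteSpace Y := hY.1.completeSpace_coe
  rw [← orthogonal_le_orthogonal_iff]
  refine ⟨fun h Z _ hZ ↦ hZ.trans h, le_of_forall_mem_sepGrassmannian_le
    (isClosed_orthogonal X) hXo ?_⟩
  rwa [orthogonal_orthogonal]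

theorem stmt14 {H : Type*} [NormedAddCommGroup H] [InnerProductSpace ℂ H] [CompleteSpace H]
    (hH : ¬ FiniteDimensional ℂ H)
    (X Y : Submodule ℂ H) (hX : X ∈ sepGrassmannian H) (hY : Y ∈ sepGrassmannian H) :
    Y ≤ X ↔ ∀ Z ∈ sepGrassmannian H, Z ≤ Xᗮ → Z ≤ Yᗮ :=
  stmt14_general X Y hX hY
end

section
/- Let H be an infinite-dimensional complex Hilbert space, let G be the set of closed separable infinite-dimensional subspaces of H of infinite codimension, and let h : G → G be a bijection such that for all X, Z ∈ G, Z ⊆ X^⊥ if and only if h(Z) ⊆ h(X)^⊥. Then for all X, Y ∈ G, Y ⊆ X if and only if h(Y) ⊆ h(X). -/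
/-- Given a closed infinite-dimensional subspace `V` with infinite-dimensional orthogonal
complement and a vector `z ∈ V`, there is an element of the Grassmannian containing `z`
and contained in `V`. -/
lemma exists_sepGrassmannian_mem {H : Type*} [NormedAddCommGroup H] [InnerProductSpace ℂ H]
    (V : Submodule ℂ H) (hVc : IsClosed (V : Set H)) (hV : ¬ FiniteDimensional ℂ V)
    (hVo : ¬ FiniteDimensional ℂ Vᗮ) (z : H) (hz : z ∈ V) :
    ∃ Z ∈ sepGrassmannian H, z ∈ Z ∧ Z ≤ V := by
  -- get a countably infinite linearly independent set in V
  have hrank : (Cardinal.aleph0 : Cardinal) ≤ Module.rank ℂ V := by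
    rw [← not_lt, Module.rank_lt_aleph0_iff]
    exact hV
  obtain ⟨s, hscard, hsli⟩ := le_rank_iff_exists_linearIndependent.mp hrank
  have hsinf' : Infinite s := by
    rw [Cardinal.infinite_iff, hscard]
  -- the set in H
  set S : Set H := (V.subtype '' s) ∪ {z} with hS
  have hScount : S.Countable := by
    apply Set.Countable.union _ (Set.countable_singleton z)
    apply Set.Countable.image
    rw [← Set.countable_coe_iff, ← Cardinal.mk_le_aleph0_iff, hscard]
  have hSV : S ⊆ (V : Set H) := by
    rintro x (⟨v, _, rfl⟩ | rfl)
    · exact v.2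
    · exact hz
  set Z : Submodule ℂ H := (Submodule.span ℂ S).topologicalClosure with hZ
  have hspan_le : Submodule.span ℂ S ≤ V := Submodule.span_le.mpr hSV
  have hZV : Z ≤ V := Submodule.topologicalClosure_minimal _ hspan_le hVc
  have hzZ : z ∈ Z := Submodule.le_topologicalClosure _ <|
    Submodule.subset_span (Set.mem_union_right _ rfl)
  refine ⟨Z, ⟨Submodule.isClosed_topologicalClosure _, ?_, ?_, ?_⟩, hzZ, hZV⟩
  · -- separable
    have h1 : TopologicalSpace.IsSeparable (Submodule.span ℂ S : Set H) :=
      (hScount.isSeparable).span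
    have h2 : TopologicalSpace.IsSeparable (Z : Set H) := by
      have := h1.closure
      exact this
    exact h2.separableSpace
  · -- infinite dimensional
    intro hfin
    set W := Submodule.span ℂ (V.subtype '' s) with hW
    have hle : W ≤ Z :=
      le_trans (Submodule.span_mono (Set.subset_union_left)) (Submodule.le_topologicalClosure _)
    have hWfin : FiniteDimensional ℂ W := Submodule.finiteDimensional_of_le hle
    have hliH : LinearIndependent ℂ (fun x : s => V.subtype x) :=
      hsli.map' V.subtype (Submodule.ker_subtype V)
    have hg : LinearIndependent ℂ (fun x : s =>
        (⟨V.subtype x, Submodule.subset_span (Set.mem_image_of_mem _ x.2)⟩ : W)) :=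
      hliH.of_comp W.subtype
    exact Module.Finite.not_linearIndependent_of_infinite _ hg
  · -- infinite codimension
    intro hfin
    exact hVo (Submodule.finiteDimensional_of_le (Submodule.orthogonal_le hZV))

/-- Inclusion is characterized by the orthogonality relation within the Grassmannian. -/
lemma le_iff_orth_char {H : Type*} [NormedAddCommGroup H] [InnerProductSpace ℂ H]
    [CompleteSpace H] {X Y : Submodule ℂ H} (hX : X ∈ sepGrassmannian H)
    (_hY : Y ∈ sepGrassmannian H) :
    Y ≤ X ↔ ∀ Z ∈ sepGrassmannian H, Z ≤ Xᗮ → Z ≤ Yᗮ := by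
  constructor
  · intro hYX Z _ hZX
    exact hZX.trans (Submodule.orthogonal_le hYX)
  · intro hforall
    by_contra hYX
    obtain ⟨y, hyY, hyX⟩ := SetLike.not_le_iff_exists.mp hYX
    -- X is closed, so X = Xᗮᗮ
    have : CompleteSpace X := hX.1.completeSpace_coe
    have hXoo : Xᗮᗮ = X := Submodule.orthogonal_orthogonal X
    have hyXoo : y ∉ Xᗮᗮ := by rwa [hXoo]
    rw [Submodule.mem_orthogonal] at hyXoo
    push_neg at hyXoo
    obtain ⟨z, hzXo, hzy⟩ := hyXoo
    -- construct Z ∈ G with z ∈ Z ≤ Xᗮ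
    have hXoinf : ¬ FiniteDimensional ℂ Xᗮ := hX.2.2.2
    have hXooinf : ¬ FiniteDimensional ℂ Xᗮᗮ := by rw [hXoo]; exact hX.2.2.1
    obtain ⟨Z, hZG, hzZ, hZXo⟩ := exists_sepGrassmannian_mem Xᗮ
      (Submodule.isClosed_orthogonal X) hXoinf hXooinf z hzXo
    have hZYo := hforall Z hZG hZXo
    exact hzy ((Submodule.mem_orthogonal' Y z).mp (hZYo hzZ) y hyY)

theorem stmt15 {H : Type*} [NormedAddCommGroup H] [InnerProductSpace ℂ H] [CompleteSpace H]
    (hH : ¬ FiniteDimensional ℂ H)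
    (h : Submodule ℂ H → Submodule ℂ H)
    (hbij : Set.BijOn h (sepGrassmannian H) (sepGrassmannian H))
    (horth : ∀ X ∈ sepGrassmannian H, ∀ Z ∈ sepGrassmannian H,
      (Z ≤ Xᗮ ↔ h Z ≤ (h X)ᗮ)) :
    ∀ X ∈ sepGrassmannian H, ∀ Y ∈ sepGrassmannian H, (Y ≤ X ↔ h Y ≤ h X) := by
  intro X hX Y hY
  have hhX : h X ∈ sepGrassmannian H := hbij.mapsTo hX
  have hhY : h Y ∈ sepGrassmannian H := hbij.mapsTo hY
  rw [le_iff_orth_char hX hY, le_iff_orth_char hhX hhY]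
  constructor
  · intro hforall W hW hWX
    obtain ⟨Z, hZ, rfl⟩ := hbij.surjOn hW
    exact (horth Y hY Z hZ).mp (hforall Z hZ ((horth X hX Z hZ).mpr hWX))
  · intro hforall Z hZ hZX
    exact (horth Y hY Z hZ).mpr (hforall (h Z) (hbij.mapsTo hZ) ((horth X hX Z hZ).mp hZX))
end

section
/- Let H be a complex Hilbert space and let A, B be compact self-adjoint operators on H. If for every eigenspace X of A corresponding to a nonzero eigenvalue and every eigenspace Y of B corresponding to a nonzero eigenvalue the projections P_X and P_Y commute, then A and B commute. -/
/-!
The eigenspaces of a compact self-adjoint operator span a dense subspace (the spectral theorem), so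
an operator vanishing on all of them, or whose adjoint does, is zero. Apply this to the skew-adjoint
commutator `C = T S - S T` of a compact self-adjoint `T` and a self-adjoint `S` that preserves the
eigenspaces of `T` for nonzero eigenvalues: `C` clearly vanishes on those, and on `ker T` it equals
`T S`, which is orthogonal to every eigenvector of `T` by self-adjointness. So `T` and `S` commute.

For the theorem, commuting with the projection onto a closed subspace means preserving that
subspace. Applying the above with `T = B` and `S = P_X` shows that each `P_X` commutes with `B`,
i.e. `B` preserves every eigenspace of `A` for a nonzero eigenvalue; applying it again with
`T = A`, `S = B` gives `A B = B A`.
-/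

open Module End ContinuousLinearMap

namespace ContinuousLinearMap

variable {𝕜 E : Type*} [RCLike 𝕜] [NormedAddCommGroup E] [InnerProductSpace 𝕜 E] [CompleteSpace E]
  {T S : E →L[𝕜] E}

local notation "⟪" x ", " y "⟫" => @inner 𝕜 _ _ x y

theorem eq_zero_of_forall_eigenspace_inner_eq_zero (hT : IsCompactOperator T)
    (hT' : (T : End 𝕜 E).IsSymmetric) {v : E}
    (h : ∀ μ, ∀ z ∈ eigenspace (T : End 𝕜 E) μ, ⟪z, v⟫ = 0) : v = 0 := by
  have hv : v ∈ (⨆ μ, eigenspace (T : End 𝕜 E) μ)ᗮ := by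
    rw [← Submodule.iInf_orthogonal, Submodule.mem_iInf]
    exact fun μ => (Submodule.mem_orthogonal _ v).mpr (h μ)
  rwa [orthogonalComplement_iSup_eigenspaces_eq_bot hT hT', Submodule.mem_bot] at hv

theorem eq_zero_of_forall_eigenspace_adjoint_apply_eq_zero (hT : IsCompactOperator T)
    (hT' : (T : End 𝕜 E).IsSymmetric) {C : E →L[𝕜] E}
    (h : ∀ μ, ∀ z ∈ eigenspace (T : End 𝕜 E) μ, adjoint C z = 0) : C = 0 := by
  ext x
  refine eq_zero_of_forall_eigenspace_inner_eq_zero hT hT' fun μ z hz => ?_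
  rw [← adjoint_inner_left, h μ z hz, inner_zero_left]

theorem commute_of_eigenspace_mem_invtSubmodule (hT : IsCompactOperator T) (hT' : IsSelfAdjoint T)
    (hS : IsSelfAdjoint S)
    (h : ∀ μ ≠ 0, eigenspace (T : End 𝕜 E) μ ∈ invtSubmodule (S : End 𝕜 E)) :
    Commute T S := by
  set C := T * S - S * T
  have hC_adjoint : adjoint C = -C := by
    rw [← star_eq_adjoint, star_sub, star_mul, star_mul, hT'.star_eq, hS.star_eq, neg_sub]
  have hC_ne_zero : ∀ μ ≠ 0, ∀ z ∈ eigenspace (T : End 𝕜 E) μ, C z = 0 := by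
    intro μ hμ z hz
    have hSz : T (S z) = μ • S z := mem_eigenspace_iff.mp (h μ hμ hz)
    have hTz : T z = μ • z := mem_eigenspace_iff.mp hz
    simp [C, hSz, hTz]
  have hC_zero : ∀ z ∈ eigenspace (T : End 𝕜 E) 0, C z = 0 := by
    intro z hz
    have hTz : T z = 0 := by simpa using mem_eigenspace_iff.mp hz
    suffices T (S z) = 0 by simp [C, hTz, this]
    refine eq_zero_of_forall_eigenspace_inner_eq_zero hT hT'.isSymmetric fun μ w hw => ?_
    have hsymm : ⟪w, T (S z)⟫ = ⟪S (T w), z⟫ :=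
      ((hS.isSymmetric (T w) z).trans (hT'.isSymmetric w (S z))).symm
    rcases eq_or_ne μ 0 with rfl | hμ
    · have hTw : T w = 0 := by simpa using mem_eigenspace_iff.mp hw
      rw [hsymm, hTw, map_zero, inner_zero_left]
    · have hSTw : S (T w) = T (S w) := (sub_eq_zero.mp (hC_ne_zero μ hμ w hw)).symm
      rw [hsymm, hSTw, show ⟪T (S w), z⟫ = ⟪S w, T z⟫ from hT'.isSymmetric _ _, hTz,
        inner_zero_right]
  refine sub_eq_zero.mp (eq_zero_of_forall_eigenspace_adjoint_apply_eq_zero hT hT'.isSymmetric ?_)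
  intro μ z hz
  rw [hC_adjoint, neg_apply, neg_eq_zero]
  rcases eq_or_ne μ 0 with rfl | hμ
  · exact hC_zero z hz
  · exact hC_ne_zero μ hμ z hz

theorem eigenspace_mem_invtSubmodule_of_commute_starProjection {μ : 𝕜}
    (h : HasEigenvalue (T : End 𝕜 E) μ → Commute (eigenspace (T : End 𝕜 E) μ).starProjection S) :
    eigenspace (T : End 𝕜 E) μ ∈ invtSubmodule (S : End 𝕜 E) := by
  by_cases hμ : HasEigenvalue (T : End 𝕜 E) μ
  · have hP := Submodule.isIdempotentElem_starProjection (eigenspace (T : End 𝕜 E) μ)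
    simpa using ((IsIdempotentElem.commute_iff hP).mp (h hμ)).1
  · rw [hasEigenvalue_iff, not_not] at hμ
    rw [hμ]
    exact invtSubmodule.bot_mem _

end ContinuousLinearMap

theorem stmt17 {H : Type*} [NormedAddCommGroup H] [InnerProductSpace ℂ H] [CompleteSpace H]
    (A B : H →L[ℂ] H) (hA : IsSelfAdjoint A) (hB : IsSelfAdjoint B)
    (hcA : IsCompactOperator (A : H → H)) (hcB : IsCompactOperator (B : H → H))
    (hcomm : ∀ α β : ℂ, α ≠ 0 → β ≠ 0 →
      Module.End.HasEigenvalue (A : H →ₗ[ℂ] H) α →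
      Module.End.HasEigenvalue (B : H →ₗ[ℂ] H) β →
      ∀ P Q : H →L[ℂ] H,
        IsSelfAdjoint P → IsIdempotentElem P →
        LinearMap.range (P : H →ₗ[ℂ] H) = Module.End.eigenspace (A : H →ₗ[ℂ] H) α →
        IsSelfAdjoint Q → IsIdempotentElem Q →
        LinearMap.range (Q : H →ₗ[ℂ] H) = Module.End.eigenspace (B : H →ₗ[ℂ] H) β →
        P * Q = Q * P) :
    A * B = B * A := by
  have hPB : ∀ α ≠ 0, HasEigenvalue (A : End ℂ H) α →
      Commute B (eigenspace (A : End ℂ H) α).starProjection := fun α hα hαA =>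
    commute_of_eigenspace_mem_invtSubmodule hcB hB (isSelfAdjoint_starProjection _)
      fun β hβ => eigenspace_mem_invtSubmodule_of_commute_starProjection fun hβB =>
        (hcomm α β hα hβ hαA hβB _ _ (isSelfAdjoint_starProjection _)
          (Submodule.isIdempotentElem_starProjection _) (Submodule.range_starProjection _)
          (isSelfAdjoint_starProjection _) (Submodule.isIdempotentElem_starProjection _)
          (Submodule.range_starProjection _)).symm
  exact commute_of_eigenspace_mem_invtSubmodule hcA hA hB fun α hα =>
    eigenspace_mem_invtSubmodule_of_commute_starProjection fun hαA => (hPB α hα hαA).symm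
end
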